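/- Let x be a vector of n positive reals, n ≥ 2, and 2 ≤ k ≤ n. Then (n−k)E_{k+1}(x)/E_k(x) − 2(n−k+1)E_k(x)/E_{k−1}(x) + (n−k+2)E_{k−1}(x)/E_{k−2}(x) ≥ 0, where E_j is the normalized elementary symmetric polynomial (with E_{n+1} = 0). Consequently, the k-DPP expectation D_k(x) = e₁(x) − (k+1)e_{k+1}(x)/e_k(x) is concave in k: D_{j+1}(x) − D_j(x) ≤ D_j(x) − D_{j−1}(x) for all 0 < j < n. -/

import Mathlib

open BigOperators

/-- The elementary symmetric polynomial of degree `k` in the entries of `x`. -/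
noncomputable def esym {n : ℕ} (k : ℕ) (x : Fin n → ℝ) : ℝ :=
  ∑ S ∈ Finset.univ.powersetCard k, ∏ i ∈ S, x i

/-- The normalized elementary symmetric polynomial `E_k(x) = e_k(x)/C(n,k)`
(equal to `0` for `k > n`). -/
noncomputable def nesym {n : ℕ} (k : ℕ) (x : Fin n → ℝ) : ℝ :=
  esym k x / (n.choose k)

/-- The k-DPP expectation `D_k(x) = e₁(x) − (k+1) e_{k+1}(x)/e_k(x)`. -/
noncomputable def dpp {n : ℕ} (k : ℕ) (x : Fin n → ℝ) : ℝ :=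
  esym 1 x - (k + 1) * esym (k + 1) x / esym k x

/-!
Write `r_k = (k+1) e_{k+1} / e_k`. Since `(n-k) E_{k+1} / E_k = r_k` and `D_k = e_1 - r_k`, both
claims say that `k ↦ r_k` is convex. By Rolle, the derivative of `∏ (1 + x_i t) = ∑ e_k t^k`
has only real roots, and they are negative because its coefficients are positive; so it equals
`e_1 ∏ (1 + z_i t)` with all `z_i > 0`, i.e. `e_1 e_k(z) = (k+1) e_{k+1}(x)`, which gives
`r_k(z) = r_{k+1}(x)`. This lowers the second difference of `r` down to `k = 0`, where
`e_1 e_2 (r_0 - 2 r_1 + r_2) = p_1 p_3 - p_2^2 ≥ 0` for the power sums `p_j`, by Cauchy–Schwarz.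
-/

open Polynomial

namespace Polynomial

lemma eval_pos_of_coeff_nonneg {R : Type*} [CommSemiring R] [PartialOrder R]
    [IsStrictOrderedRing R] {p : R[X]} (hp : ∀ j, 0 ≤ p.coeff j) (hp0 : 0 < p.coeff 0) {x : R}
    (hx : 0 ≤ x) : 0 < p.eval x := by
  rw [eval_eq_sum_range]
  exact Finset.sum_pos' (fun j _ => mul_nonneg (hp j) (pow_nonneg hx j))
    ⟨0, by simp, by simpa using hp0⟩

end Polynomial

namespace Multiset

section Semiring

variable {R : Type*} [CommSemiring R]

@[simp] lemma esymm_zero (s : Multiset R) : s.esymm 0 = 1 := by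
  simp [esymm, powersetCard_zero_left]

lemma esymm_one (s : Multiset R) : s.esymm 1 = s.sum := by
  simp [esymm, powersetCard_one]

@[simp] lemma zero_esymm_succ (k : ℕ) : (0 : Multiset R).esymm (k + 1) = 0 := by
  simp [esymm, powersetCard_zero_right]

lemma esymm_cons_succ (a : R) (s : Multiset R) (k : ℕ) :
    (a ::ₘ s).esymm (k + 1) = s.esymm (k + 1) + a * s.esymm k := by
  simp [esymm, powersetCard_cons, sum_map_mul_left]

lemma esymm_eq_zero_of_card_lt {s : Multiset R} {k : ℕ} (h : card s < k) : s.esymm k = 0 := by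
  simp [esymm, powersetCard_eq_empty _ h]

lemma esymm_nonneg [PartialOrder R] [IsOrderedRing R] {s : Multiset R} (hs : ∀ a ∈ s, 0 ≤ a)
    (k : ℕ) : 0 ≤ s.esymm k := by
  refine sum_nonneg fun p hp => ?_
  obtain ⟨t, ht, rfl⟩ := mem_map.1 hp
  exact prod_nonneg fun a ha => hs a (mem_of_le (mem_powersetCard.1 ht).1 ha)

lemma esymm_pos [PartialOrder R] [IsStrictOrderedRing R] {s : Multiset R}
    (hs : ∀ a ∈ s, 0 < a) {k : ℕ} (hk : k ≤ card s) : 0 < s.esymm k := by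
  induction s using Multiset.induction_on generalizing k with
  | empty => simp_all
  | cons a s ih =>
    cases k with
    | zero => simp
    | succ k =>
      have hs' : ∀ b ∈ s, 0 < b := fun b hb => hs b (mem_cons_of_mem hb)
      rw [esymm_cons_succ]
      exact add_pos_of_nonneg_of_pos (esymm_nonneg (fun b hb => (hs' b hb).le) _)
        (mul_pos (hs a (mem_cons_self a s)) (ih hs' (by simpa using hk)))

noncomputable def esymmGenPoly (s : Multiset R) : R[X] := (s.map fun a => 1 + C a * X).prod

@[simp] lemma esymmGenPoly_zero : esymmGenPoly (0 : Multiset R) = 1 := by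
  simp [esymmGenPoly]

@[simp] lemma esymmGenPoly_cons (a : R) (s : Multiset R) :
    esymmGenPoly (a ::ₘ s) = (1 + C a * X) * esymmGenPoly s := by
  simp [esymmGenPoly]

lemma coeff_esymmGenPoly (s : Multiset R) (k : ℕ) : (esymmGenPoly s).coeff k = s.esymm k := by
  induction s using Multiset.induction_on generalizing k with
  | empty => cases k <;> simp [coeff_one]
  | cons a s ih =>
    cases k with
    | zero => simp [ih]
    | succ k => simp [add_mul, mul_assoc, coeff_X_mul, ih, esymm_cons_succ, add_comm]

lemma natDegree_esymmGenPoly_le (s : Multiset R) : (esymmGenPoly s).natDegree ≤ card s :=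
  natDegree_le_iff_coeff_eq_zero.2 fun k hk => by
    rw [coeff_esymmGenPoly, esymm_eq_zero_of_card_lt (by exact_mod_cast hk)]

end Semiring

section Ring

variable {R : Type*} [CommRing R]

lemma two_mul_esymm_two (s : Multiset R) :
    2 * s.esymm 2 = s.sum ^ 2 - (s.map (· ^ 2)).sum := by
  induction s using Multiset.induction_on with
  | empty => simp
  | cons a s ih =>
    rw [esymm_cons_succ, esymm_one, sum_cons, map_cons, sum_cons]
    linear_combination ih

lemma six_mul_esymm_three (s : Multiset R) :
    6 * s.esymm 3 =
      s.sum ^ 3 - 3 * s.sum * (s.map (· ^ 2)).sum + 2 * (s.map (· ^ 3)).sum := by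
  induction s using Multiset.induction_on with
  | empty => simp
  | cons a s ih =>
    rw [esymm_cons_succ, map_cons, map_cons, sum_cons, sum_cons, sum_cons]
    linear_combination ih + 3 * a * two_mul_esymm_two s

end Ring

section Field

variable {R : Type*} [Field R]

def esymmRatio (s : Multiset R) (k : ℕ) : R := (k + 1) * s.esymm (k + 1) / s.esymm k

lemma esymmGenPoly_eq_C_prod_mul {s : Multiset R} (hs : ∀ a ∈ s, a ≠ 0) :
    esymmGenPoly s = C s.prod * (s.map fun a => X - C (-a⁻¹)).prod := by
  rw [esymmGenPoly, map_multiset_prod C, ← prod_map_mul]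
  refine congrArg prod (map_congr rfl fun a ha => ?_)
  rw [mul_sub, ← C_mul, mul_neg, mul_inv_cancel₀ (hs a ha)]
  simp [add_comm]

lemma roots_esymmGenPoly {s : Multiset R} (hs : ∀ a ∈ s, a ≠ 0) :
    (esymmGenPoly s).roots = s.map fun a => -a⁻¹ := by
  rw [esymmGenPoly_eq_C_prod_mul hs, roots_C_mul _ (prod_ne_zero fun h => hs 0 h rfl)]
  simpa [map_map] using roots_multiset_prod_X_sub_C (s.map fun a => -a⁻¹)

lemma eq_C_coeff_zero_mul_esymmGenPoly {p : R[X]} (hroots : card p.roots = p.natDegree)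
    (h0 : ∀ ρ ∈ p.roots, ρ ≠ 0) :
    p = C (p.coeff 0) * esymmGenPoly (p.roots.map fun ρ => -ρ⁻¹) := by
  set t := p.roots.map fun ρ => -ρ⁻¹
  have ht : ∀ a ∈ t, a ≠ 0 := by
    simp only [t, mem_map]
    rintro _ ⟨ρ, hρ, rfl⟩
    simpa using h0 ρ hρ
  have htp : (t.map fun a => X - C (-a⁻¹)) = p.roots.map fun ρ => X - C ρ := by
    simp [t, map_map, sub_eq_add_neg]
  have hp : p = C (p.leadingCoeff / t.prod) * esymmGenPoly t := by
    rw [esymmGenPoly_eq_C_prod_mul ht, htp, ← mul_assoc, ← C_mul,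
      div_mul_cancel₀ _ (prod_ne_zero fun h => ht 0 h rfl),
      C_leadingCoeff_mul_prod_multiset_X_sub_C hroots]
  have hc := congrArg (coeff · 0) hp
  simp only [coeff_C_mul, coeff_esymmGenPoly, esymm_zero, mul_one] at hc
  rwa [← hc] at hp

lemma esymmRatio_eq_of_derivative_esymmGenPoly [CharZero R] {s t : Multiset R}
    (hs : s.esymm 1 ≠ 0)
    (h : derivative (esymmGenPoly s) = C (s.esymm 1) * esymmGenPoly t) (k : ℕ) :
    t.esymmRatio k = s.esymmRatio (k + 1) := by
  have ht : ∀ j : ℕ, t.esymm j = (j + 1) * s.esymm (j + 1) / s.esymm 1 := fun j => by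
    have := congrArg (coeff · j) h
    simp only [coeff_derivative, coeff_C_mul, coeff_esymmGenPoly] at this
    rw [eq_div_iff hs]
    linear_combination -this
  rw [esymmRatio, esymmRatio, ht, ht, ← mul_div_assoc, div_div_div_cancel_right₀ hs]
  push_cast
  rw [mul_div_mul_left _ _ (Nat.cast_add_one_ne_zero k)]

variable [LinearOrder R] [IsStrictOrderedRing R]

lemma sq_sum_map_sq_le {s : Multiset R} (hs : ∀ a ∈ s, 0 ≤ a) :
    (s.map (· ^ 2)).sum ^ 2 ≤ s.sum * (s.map (· ^ 3)).sum := by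
  rw [← s.map_univ_coe] at hs ⊢
  simp only [map_map, Function.comp_def, ← Finset.sum_eq_multiset_sum]
  have hs' (i : s) : 0 ≤ (i : R) := hs _ (mem_map_of_mem _ (Finset.mem_univ_val i))
  exact Finset.sum_sq_le_sum_mul_sum_of_sq_le_mul _ (fun i _ => hs' i)
    (fun i _ => pow_nonneg (hs' i) 3) fun i _ => le_of_eq (by ring)

lemma two_mul_esymmRatio_one_le {s : Multiset R} (hs : ∀ a ∈ s, 0 ≤ a) :
    2 * s.esymmRatio 1 ≤ s.esymmRatio 0 + s.esymmRatio 2 := by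
  have hp1 : 0 ≤ s.sum := esymm_one s ▸ esymm_nonneg hs 1
  have hp2 : 0 ≤ (s.map (· ^ 2)).sum := sum_nonneg (by simp [sq_nonneg])
  have h2 := two_mul_esymm_two s
  have h3 := six_mul_esymm_three s
  norm_num [esymmRatio, esymm_one]
  rcases (esymm_nonneg hs 2).eq_or_lt with he2 | he2
  · simp [← he2, hp1]
  replace hp1 : 0 < s.sum := by nlinarith
  have key : s.sum + 3 * s.esymm 3 / s.esymm 2 - 2 * (2 * s.esymm 2 / s.sum) =
      (s.sum * (s.map (· ^ 3)).sum - (s.map (· ^ 2)).sum ^ 2) / (s.sum * s.esymm 2) := by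
    field_simp
    linear_combination ((s.map (· ^ 2)).sum - s.sum ^ 2 / 2 - 2 * s.esymm 2) * h2 + s.sum / 2 * h3
  rw [← sub_nonneg, key]
  exact div_nonneg (sub_nonneg.2 (sq_sum_map_sq_le hs)) (by positivity)

end Field

lemma card_roots_derivative_esymmGenPoly {s : Multiset ℝ} (hs : ∀ a ∈ s, a ≠ 0) :
    card (derivative (esymmGenPoly s)).roots = (derivative (esymmGenPoly s)).natDegree := by
  have hrolle : card s ≤ card (derivative (esymmGenPoly s)).roots + 1 := by
    simpa [roots_esymmGenPoly hs] using card_roots_le_derivative (esymmGenPoly s)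
  have hdeg := (natDegree_derivative_le (esymmGenPoly s)).trans
    (Nat.sub_le_sub_right (natDegree_esymmGenPoly_le s) 1)
  have := card_roots' (derivative (esymmGenPoly s))
  omega

theorem exists_derivative_esymmGenPoly_eq {s : Multiset ℝ} (hs : ∀ a ∈ s, 0 < a) :
    ∃ t : Multiset ℝ, (∀ a ∈ t, 0 < a) ∧
      derivative (esymmGenPoly s) = C (s.esymm 1) * esymmGenPoly t := by
  rcases eq_or_ne s 0 with rfl | hs0
  · exact ⟨0, by simp⟩
  set Q := derivative (esymmGenPoly s) with hQ
  have hcoeff (j : ℕ) : Q.coeff j = (j + 1) * s.esymm (j + 1) := by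
    rw [hQ, coeff_derivative, coeff_esymmGenPoly, mul_comm]
  have hneg : ∀ ρ ∈ Q.roots, ρ < 0 := by
    intro ρ hρ
    by_contra! hρ0
    refine (eval_pos_of_coeff_nonneg (fun j => ?_) ?_ hρ0).ne' (mem_roots'.1 hρ).2
    · rw [hcoeff]
      exact mul_nonneg (by positivity) (esymm_nonneg (fun a ha => (hs a ha).le) _)
    · rw [hcoeff]
      simpa using esymm_pos hs (card_pos.2 hs0)
  refine ⟨Q.roots.map fun ρ => -ρ⁻¹, ?_, ?_⟩
  · simp only [mem_map]
    rintro _ ⟨ρ, hρ, rfl⟩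
    exact neg_pos.2 (inv_lt_zero.2 (hneg ρ hρ))
  · have h := eq_C_coeff_zero_mul_esymmGenPoly (p := Q)
      (card_roots_derivative_esymmGenPoly fun a ha => (hs a ha).ne') fun ρ hρ => (hneg ρ hρ).ne
    rwa [hcoeff 0, Nat.cast_zero, zero_add, one_mul, zero_add] at h

-- No bound on `k` is needed: once `e_{k+1} = 0` the ratios vanish (`x / 0 = 0`).
theorem two_mul_esymmRatio_succ_le {s : Multiset ℝ} (hs : ∀ a ∈ s, 0 < a) (k : ℕ) :
    2 * s.esymmRatio (k + 1) ≤ s.esymmRatio k + s.esymmRatio (k + 2) := by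
  induction k generalizing s with
  | zero => exact two_mul_esymmRatio_one_le fun a ha => (hs a ha).le
  | succ k ih =>
    rcases eq_or_ne s 0 with rfl | hs0
    · simp [esymmRatio]
    obtain ⟨t, ht, hst⟩ := exists_derivative_esymmGenPoly_eq hs
    have hs1 := (esymm_pos hs (card_pos.2 hs0) : 0 < s.esymm 1).ne'
    simpa only [esymmRatio_eq_of_derivative_esymmGenPoly hs1 hst] using ih ht

end Multiset

lemma esym_eq_esymm {n : ℕ} (k : ℕ) (x : Fin n → ℝ) :
    esym k x = (Finset.univ.val.map x).esymm k :=
  (Finset.esymm_map_val x _ k).symm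

lemma sub_mul_nesym_succ_div_nesym {n : ℕ} (x : Fin n → ℝ) (j : ℕ) :
    (n - j : ℝ) * nesym (j + 1) x / nesym j x = (Finset.univ.val.map x).esymmRatio j := by
  rw [Multiset.esymmRatio, ← esym_eq_esymm, ← esym_eq_esymm, nesym, nesym]
  rcases lt_or_ge j n with hj | hj
  · have hchoose : ((n : ℝ) - j) * n.choose j = (j + 1) * n.choose (j + 1) := by
      have h := congrArg (Nat.cast : ℕ → ℝ) (Nat.choose_succ_right_eq n j)
      push_cast [Nat.cast_sub hj.le] at h
      linear_combination -h
    have hc : (n.choose (j + 1) : ℝ) ≠ 0 := by exact_mod_cast (Nat.choose_pos hj).ne'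
    calc _ = ((n - j) * n.choose j / n.choose (j + 1)) * esym (j + 1) x / esym j x := by
          simp only [div_eq_mul_inv, mul_inv, inv_inv]; ring
      _ = _ := by rw [hchoose, mul_div_cancel_right₀ _ hc]
  · rw [esym_eq_esymm (j + 1),
      Multiset.esymm_eq_zero_of_card_lt (by simpa using Nat.lt_succ_of_le hj)]
    simp

theorem stmt_10_general (n : ℕ) (x : Fin n → ℝ) (hx : ∀ i, 0 < x i) :
    (∀ k : ℕ, 2 ≤ k → k ≤ n →
      0 ≤ (n - k : ℝ) * nesym (k + 1) x / nesym k x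
          - 2 * ((n - k + 1 : ℝ) * nesym k x / nesym (k - 1) x)
          + (n - k + 2 : ℝ) * nesym (k - 1) x / nesym (k - 2) x) ∧
    (∀ j : ℕ, 0 < j → j < n →
      dpp (j + 1) x - dpp j x ≤ dpp j x - dpp (j - 1) x) := by
  set s := Finset.univ.val.map x
  have hs : ∀ a ∈ s, 0 < a := by simpa [s] using hx
  have hconv := Multiset.two_mul_esymmRatio_succ_le hs
  refine ⟨fun k hk _ => ?_, fun j hj _ => ?_⟩
  · obtain ⟨l, rfl⟩ := Nat.exists_eq_add_of_le' hk
    calc (0 : ℝ) ≤ s.esymmRatio (l + 2) - 2 * s.esymmRatio (l + 1) + s.esymmRatio l := by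
          linarith [hconv l]
      _ = _ := by
        simp only [s, ← sub_mul_nesym_succ_div_nesym]
        push_cast
        ring_nf
  · obtain ⟨l, rfl⟩ := Nat.exists_eq_add_of_le' hj
    have hdpp (k : ℕ) : dpp k x = s.esymm 1 - s.esymmRatio k := by
      simp only [dpp, Multiset.esymmRatio, esym_eq_esymm, s]
    rw [hdpp, hdpp, hdpp, Nat.add_sub_cancel]
    linarith [hconv l]

/-- For `x` a vector of `n ≥ 2` positive reals and `2 ≤ k ≤ n`:
`(n−k)E_{k+1}/E_k − 2(n−k+1)E_k/E_{k−1} + (n−k+2)E_{k−1}/E_{k−2} ≥ 0`; consequently the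
k-DPP expectation is concave in `k`: `D_{j+1} − D_j ≤ D_j − D_{j−1}` for `0 < j < n`. -/
theorem stmt_10 (n : ℕ) (hn : 2 ≤ n) (x : Fin n → ℝ) (hx : ∀ i, 0 < x i) :
    (∀ k : ℕ, 2 ≤ k → k ≤ n →
      0 ≤ (n - k : ℝ) * nesym (k + 1) x / nesym k x
          - 2 * ((n - k + 1 : ℝ) * nesym k x / nesym (k - 1) x)
          + (n - k + 2 : ℝ) * nesym (k - 1) x / nesym (k - 2) x) ∧
    (∀ j : ℕ, 0 < j → j < n →
      dpp (j + 1) x - dpp j x ≤ dpp j x - dpp (j - 1) x) :=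
  stmt_10_general n x hx
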